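/- If G is a graph that is both 5-connected and contraction critical quasi 5-connected (no edge of G is quasi 5-contractible), then |V(G)| ≥ 10. -/

import Mathlib

open SimpleGraph Set

variable {V : Type*}

/-- `G` is `k`-connected: more than `k` vertices and removing fewer than `k`
vertices leaves a connected graph. -/
def IsKConnected (k : ℕ) [Fintype V] (G : SimpleGraph V) : Prop :=
  k + 1 ≤ Fintype.card V ∧
    ∀ S : Set V, S.ncard < k → (G.induce Sᶜ).Connected

/-- Contraction of the edge `xy`: identify `y` with `x`, simplifying multiple edges. -/
def contractE [DecidableEq V] (G : SimpleGraph V) (x y : V) :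
    SimpleGraph {v : V // v ≠ y} :=
  SimpleGraph.fromRel (fun a b =>
    G.Adj a.1 b.1 ∨ (a.1 = x ∧ G.Adj y b.1) ∨ (b.1 = x ∧ G.Adj y a.1))

/-- The (outer) neighborhood of a vertex set `A`. -/
def gBoundary (G : SimpleGraph V) (A : Set V) : Set V :=
  {v | v ∉ A ∧ ∃ a ∈ A, G.Adj v a}

/-- `S` separates `G`: the rest of the graph splits into two nonempty parts
with no edges between them. -/
def Separates (G : SimpleGraph V) (S : Set V) : Prop :=
  ∃ A B : Set V, A.Nonempty ∧ B.Nonempty ∧ Disjoint A B ∧ A ∪ B = Sᶜ ∧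
    ∀ a ∈ A, ∀ b ∈ B, ¬ G.Adj a b

/-- `T` is a nontrivial 4-cut: `|T| = 4` and `G - T` splits into two parts,
each of size at least 2, with no edges between them. -/
def IsNontrivialFourCut (G : SimpleGraph V) (T : Set V) : Prop :=
  T.ncard = 4 ∧ ∃ A B : Set V, 2 ≤ A.ncard ∧ 2 ≤ B.ncard ∧ Disjoint A B ∧
    A ∪ B = Tᶜ ∧ ∀ a ∈ A, ∀ b ∈ B, ¬ G.Adj a b

/-- `G` is quasi 5-connected: 4-connected without a nontrivial 4-cut. -/
def QuasiFiveConnected [Fintype V] (G : SimpleGraph V) : Prop :=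
  IsKConnected 4 G ∧ ∀ T : Set V, ¬ IsNontrivialFourCut G T

/-- `G` is contraction critical quasi 5-connected. -/
def ContractionCriticalQuasiFive [Fintype V] [DecidableEq V] (G : SimpleGraph V) : Prop :=
  QuasiFiveConnected G ∧
    ∀ x y : V, G.Adj x y → ¬ QuasiFiveConnected (contractE G x y)

/-- `A` is a fragment of `G`: both `A` and its "far side" are nonempty and the
neighborhood of `A` is a smallest separating set. -/
def IsFragment (G : SimpleGraph V) (A : Set V) : Prop :=
  A.Nonempty ∧ (Aᶜ \ gBoundary G A).Nonempty ∧
    ∀ S : Set V, Separates G S → (gBoundary G A).ncard ≤ S.ncard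

/-- A nontrivial fragment: both sides have at least two vertices. -/
def IsNontrivialFragment (G : SimpleGraph V) (A : Set V) : Prop :=
  IsFragment G A ∧ 2 ≤ A.ncard ∧ 2 ≤ (Aᶜ \ gBoundary G A).ncard

/-- Degree sum at least 9 for every pair of vertices at distance one or two. -/
def DegSumNine (G : SimpleGraph V) : Prop :=
  ∀ u v : V, (G.dist u v = 1 ∨ G.dist u v = 2) →
    9 ≤ (G.neighborSet u).ncard + (G.neighborSet v).ncard

/-!
Write `H` for the complement of `G` and suppose `|V| ≤ 9`. Contracting an edge `uv` leaves a
4-connected graph, so by criticality it has a nontrivial 4-cut. That cut contains the merged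
vertex, since otherwise it would lift to a 4-cut of `G`; counting then forces `|V| = 9` and the
two sides of the cut span a `K₂,₂` (a square) in `H` avoiding `u` and `v`.

On 9 vertices, 5-connectivity of `G` says that `H` contains neither `K₁,₄` nor `K₂,₃`. In such an
`H` a square `Q` has a disjoint square `Q'`. Let `s` be the ninth vertex and `p₁, p₂` one side of
`Q`. The squares of `H` avoiding `p₁` and a suitable vertex of `Q'` force `p₂` to be adjacent to
`s`, and so is `p₁` by symmetry. Then `s` is a third common neighbour of `p₁` and `p₂`, a `K₂,₃`.
-/

section Connectivity

variable {G : SimpleGraph V} {A B : Set V}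

theorem not_preconnected_induce_union (hA : A.Nonempty) (hB : B.Nonempty) (hAB : Disjoint A B)
    (hadj : ∀ a ∈ A, ∀ b ∈ B, ¬G.Adj a b) : ¬(G.induce (A ∪ B)).Preconnected := by
  obtain ⟨a, ha⟩ := hA
  obtain ⟨b, hb⟩ := hB
  intro hconn
  obtain ⟨p⟩ := hconn ⟨a, .inl ha⟩ ⟨b, .inr hb⟩
  obtain ⟨d, -, hd₁, hd₂⟩ :=
    p.exists_boundary_dart {z | z.1 ∈ A} ha (hAB.notMem_of_mem_right hb)
  exact hadj _ hd₁ _ (d.snd.2.resolve_left hd₂) d.adj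

variable [Fintype V] {k : ℕ}

theorem IsKConnected.ncard_add_ncard_add_le (hG : IsKConnected k G) (hA : A.Nonempty)
    (hB : B.Nonempty) (hAB : Disjoint A B) (hadj : ∀ a ∈ A, ∀ b ∈ B, ¬G.Adj a b) :
    A.ncard + B.ncard + k ≤ Fintype.card V := by
  by_contra! h
  have hS : (A ∪ B)ᶜ.ncard < k := by
    have := ncard_add_ncard_compl (A ∪ B)
    rw [ncard_union_eq hAB, Nat.card_eq_fintype_card] at this
    omega
  have hconn := hG.2 _ hS
  rw [compl_compl] at hconn
  exact not_preconnected_induce_union hA hB hAB hadj hconn.preconnected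

theorem IsKConnected.exists_adj (hG : IsKConnected k G) (hk : 0 < k) (x : V) :
    ∃ y, G.Adj x y := by
  by_contra! h
  obtain ⟨y, hy⟩ := Fintype.exists_ne_of_one_lt_card (by have := hG.1; omega) x
  have := hG.ncard_add_ncard_add_le (singleton_nonempty x) (B := {x}ᶜ) ⟨y, hy⟩
    disjoint_compl_right (by rintro a rfl b -; exact h b)
  rw [ncard_compl, ncard_singleton, Nat.card_eq_fintype_card] at this
  omega

end Connectivity

section Contraction

variable [DecidableEq V] {G : SimpleGraph V} {u v : V}

theorem contractE_adj_of_adj {a b : {w // w ≠ v}} (h : G.Adj a b) :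
    (contractE G u v).Adj a b := by
  rw [contractE, fromRel_adj]
  exact ⟨fun hab => G.ne_of_adj h (congrArg Subtype.val hab), .inl (.inl h)⟩

variable [Fintype V] {k : ℕ}

theorem card_subtype_ne (v : V) : Nat.card {w // w ≠ v} = Fintype.card V - 1 := by
  rw [Nat.card_eq_fintype_card]
  exact Set.card_ne_eq v

theorem IsKConnected.connected_induce_contractE (hG : IsKConnected (k + 1) G)
    {S : Set {w // w ≠ v}} (hS : S.ncard < k) : ((contractE G u v).induce Sᶜ).Connected := by
  have hS' : (Subtype.val '' S ∪ {v}).ncard < k + 1 := by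
    have := ncard_union_le (Subtype.val '' S) {v}
    rw [ncard_image_of_injective _ Subtype.val_injective, ncard_singleton] at this
    omega
  have hv : ∀ z ∈ (Subtype.val '' S ∪ {v})ᶜ, z ≠ v := fun z hz h => hz (.inr h)
  let f : G.induce (Subtype.val '' S ∪ {v})ᶜ →g (contractE G u v).induce Sᶜ :=
    { toFun := fun z => ⟨⟨z, hv z z.2⟩, fun h => z.2 (.inl ⟨_, h, rfl⟩)⟩
      map_rel' := fun h => contractE_adj_of_adj h }
  refine (hG.2 _ hS').map f ?_
  rintro ⟨⟨z, hzv⟩, hzS⟩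
  exact ⟨⟨z, by rintro (⟨s, hs, rfl⟩ | h); exacts [hzS hs, hzv h]⟩, rfl⟩

theorem IsKConnected.le_ncard_of_contractE_separation (hG : IsKConnected k G) (huv : u ≠ v)
    {T A B : Set {w // w ≠ v}} (hu : ⟨u, huv⟩ ∈ A) (hB : B.Nonempty) (hAB : Disjoint A B)
    (hT : A ∪ B = Tᶜ) (hadj : ∀ a ∈ A, ∀ b ∈ B, ¬(contractE G u v).Adj a b) : k ≤ T.ncard := by
  have hvA : v ∉ Subtype.val '' A := fun ⟨a, _, ha⟩ => a.2 ha
  have := hG.ncard_add_ncard_add_le (A := insert v (Subtype.val '' A)) (B := Subtype.val '' B)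
    (insert_nonempty _ _) (hB.image _) ?_ ?_
  · rw [ncard_insert_of_notMem hvA, ncard_image_of_injective _ Subtype.val_injective,
      ncard_image_of_injective _ Subtype.val_injective] at this
    have hTc := ncard_add_ncard_compl T
    rw [← hT, ncard_union_eq hAB, card_subtype_ne] at hTc
    omega
  · rw [disjoint_insert_left]
    refine ⟨fun ⟨b, _, hb⟩ => b.2 hb, Set.disjoint_left.2 ?_⟩
    rintro _ ⟨a, ha, rfl⟩ ⟨b, hb, hab⟩
    exact hAB.ne_of_mem ha hb (Subtype.ext hab.symm)
  · rintro _ (rfl | ⟨a, ha, rfl⟩) _ ⟨b, hb, rfl⟩ h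
    · refine hadj _ hu b hb ?_
      rw [contractE, fromRel_adj]
      exact ⟨hAB.ne_of_mem hu hb, .inl (.inr (.inl ⟨rfl, h⟩))⟩
    · exact hadj a ha b hb (contractE_adj_of_adj h)

end Contraction

namespace SimpleGraph

structure IsK14K23Free (H : SimpleGraph V) : Prop where
  ncard_neighborSet_le (x : V) : (H.neighborSet x).ncard ≤ 3
  ncard_commonNeighbors_le {x y : V} (hxy : x ≠ y) : (H.commonNeighbors x y).ncard ≤ 2

/-- A copy of `K₂,₂` in `H` with sides `{p₁, p₂}` and `{q₁, q₂}`; edges inside a side are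
allowed. -/
structure Square (H : SimpleGraph V) where
  p₁ : V
  p₂ : V
  q₁ : V
  q₂ : V
  p_ne : p₁ ≠ p₂
  q_ne : q₁ ≠ q₂
  adj₁₁ : H.Adj p₁ q₁
  adj₁₂ : H.Adj p₁ q₂
  adj₂₁ : H.Adj p₂ q₁
  adj₂₂ : H.Adj p₂ q₂

namespace Square

variable {H : SimpleGraph V} (Q : Square H) {x : V}

def verts : Set V := {Q.p₁, Q.p₂, Q.q₁, Q.q₂}

def swap : Square H :=
  ⟨Q.p₂, Q.p₁, Q.q₁, Q.q₂, Q.p_ne.symm, Q.q_ne, Q.adj₂₁, Q.adj₂₂, Q.adj₁₁, Q.adj₁₂⟩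

def flip : Square H :=
  ⟨Q.q₁, Q.q₂, Q.p₁, Q.p₂, Q.q_ne, Q.p_ne, Q.adj₁₁.symm, Q.adj₂₁.symm, Q.adj₁₂.symm,
    Q.adj₂₂.symm⟩

theorem mem_verts : x ∈ Q.verts ↔ x = Q.p₁ ∨ x = Q.p₂ ∨ x = Q.q₁ ∨ x = Q.q₂ := Iff.rfl

theorem notMem_verts : x ∉ Q.verts ↔ x ≠ Q.p₁ ∧ x ≠ Q.p₂ ∧ x ≠ Q.q₁ ∧ x ≠ Q.q₂ := by
  simp [mem_verts]

@[simp] theorem p₁_mem : Q.p₁ ∈ Q.verts := by simp [mem_verts]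
@[simp] theorem p₂_mem : Q.p₂ ∈ Q.verts := by simp [mem_verts]
@[simp] theorem q₁_mem : Q.q₁ ∈ Q.verts := by simp [mem_verts]
@[simp] theorem q₂_mem : Q.q₂ ∈ Q.verts := by simp [mem_verts]

@[simp] theorem verts_swap : Q.swap.verts = Q.verts := by
  ext; simp only [mem_verts, swap]; tauto

@[simp] theorem verts_flip : Q.flip.verts = Q.verts := by
  ext; simp only [mem_verts, flip]; tauto

theorem ncard_verts : Q.verts.ncard = 4 := by
  have := Q.adj₁₁.ne; have := Q.adj₁₂.ne; have := Q.adj₂₁.ne; have := Q.adj₂₂.ne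
  rw [verts, ncard_insert_of_notMem (by simp [*, Q.p_ne]), ncard_insert_of_notMem (by simp [*]),
    ncard_pair Q.q_ne]

theorem exists_p₁_eq (hx : x ∈ Q.verts) : ∃ R : Square H, R.p₁ = x ∧ R.verts = Q.verts := by
  rcases hx with rfl | rfl | rfl | rfl
  · exact ⟨Q, rfl, rfl⟩
  · exact ⟨Q.swap, rfl, Q.verts_swap⟩
  · exact ⟨Q.flip, rfl, Q.verts_flip⟩
  · exact ⟨Q.flip.swap, rfl, by simp⟩

end Square

def SquaresAvoidNonEdges (H : SimpleGraph V) : Prop :=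
  ∀ u v, u ≠ v → ¬H.Adj u v → ∃ Q : Square H, u ∉ Q.verts ∧ v ∉ Q.verts

namespace IsK14K23Free

variable [Finite V] {H : SimpleGraph V} {x y a b c d : V}

theorem eq_or_eq_or_eq_of_adj (hH : H.IsK14K23Free) (ha : H.Adj x a) (hb : H.Adj x b)
    (hc : H.Adj x c) (hd : H.Adj x d) (hab : a ≠ b) (hac : a ≠ c) (hbc : b ≠ c) :
    d = a ∨ d = b ∨ d = c := by
  by_contra! h
  have := (three_lt_ncard_iff (s := H.neighborSet x) (toFinite _)).2
    ⟨a, b, c, d, ha, hb, hc, hd, hab, hac, h.1.symm, hbc, h.2.1.symm, h.2.2.symm⟩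
  have := hH.ncard_neighborSet_le x
  omega

theorem eq_or_eq_of_adj_adj (hH : H.IsK14K23Free) (hxy : x ≠ y) (hxa : H.Adj x a)
    (hya : H.Adj y a) (hxb : H.Adj x b) (hyb : H.Adj y b) (hxc : H.Adj x c) (hyc : H.Adj y c)
    (hab : a ≠ b) : c = a ∨ c = b := by
  by_contra! h
  have := (two_lt_ncard_iff (s := H.commonNeighbors x y) (toFinite _)).2
    ⟨a, b, c, H.mem_commonNeighbors.2 ⟨hxa, hya⟩, H.mem_commonNeighbors.2 ⟨hxb, hyb⟩,
      H.mem_commonNeighbors.2 ⟨hxc, hyc⟩, hab, h.1.symm, h.2.symm⟩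
  have := hH.ncard_commonNeighbors_le hxy
  omega

theorem exists_ne_not_adj [Fintype V] (hH : H.IsK14K23Free) (hcard : 5 ≤ Fintype.card V)
    (x : V) : ∃ v, v ≠ x ∧ ¬H.Adj x v := by
  by_contra! h
  have hN : H.neighborSet x = {x}ᶜ := by
    ext v
    exact ⟨fun hv => (H.ne_of_adj hv).symm, h v⟩
  have := hH.ncard_neighborSet_le x
  rw [hN, ncard_compl, ncard_singleton, Nat.card_eq_fintype_card] at this
  omega

end IsK14K23Free

namespace Square

variable [Finite V] {H : SimpleGraph V} {Q Q' : Square H} {x y : V}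

theorem eq_of_adj_p₁ (hH : H.IsK14K23Free) (hx : H.Adj Q.p₁ x) (hy : H.Adj Q.p₁ y)
    (hx₁ : x ≠ Q.q₁) (hx₂ : x ≠ Q.q₂) (hy₁ : y ≠ Q.q₁) (hy₂ : y ≠ Q.q₂) : x = y := by
  rcases hH.eq_or_eq_or_eq_of_adj Q.adj₁₁ Q.adj₁₂ hx hy Q.q_ne hx₁.symm hx₂.symm with h | h | h
  · exact absurd h hy₁
  · exact absurd h hy₂
  · exact h.symm

theorem eq_q_of_adj_p₁_p₂ (hH : H.IsK14K23Free) (h₁ : H.Adj Q.p₁ x) (h₂ : H.Adj Q.p₂ x) :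
    x = Q.q₁ ∨ x = Q.q₂ :=
  hH.eq_or_eq_of_adj_adj Q.p_ne Q.adj₁₁ Q.adj₂₁ Q.adj₁₂ Q.adj₂₂ h₁ h₂ Q.q_ne

theorem p₂_mem_of_q₁_mem (hH : H.IsK14K23Free) (h₁ : Q.p₁ ∉ Q'.verts) (hq : Q.q₁ ∈ Q'.verts) :
    Q.p₂ ∈ Q'.verts := by
  obtain ⟨R, hR, hRv⟩ := Q'.exists_p₁_eq hq
  rw [← hRv] at h₁ ⊢
  by_contra h₂
  have hne : ∀ w ∈ R.verts, w ≠ Q.p₁ ∧ w ≠ Q.p₂ := fun w hw =>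
    ⟨fun h => h₁ (h ▸ hw), fun h => h₂ (h ▸ hw)⟩
  have ha : H.Adj Q.q₁ R.q₁ := hR ▸ R.adj₁₁
  have hb : H.Adj Q.q₁ R.q₂ := hR ▸ R.adj₁₂
  exact R.q_ne (Q.flip.eq_of_adj_p₁ hH ha hb (hne _ R.q₁_mem).1 (hne _ R.q₁_mem).2
    (hne _ R.q₂_mem).1 (hne _ R.q₂_mem).2)

theorem p₂_mem_of_not_disjoint (hH : H.IsK14K23Free) (h₁ : Q.p₁ ∉ Q'.verts)
    (hmeet : ¬Disjoint Q.verts Q'.verts) : Q.p₂ ∈ Q'.verts := by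
  obtain ⟨x, hx, hx'⟩ := not_disjoint_iff.1 hmeet
  rcases hx with rfl | rfl | rfl | rfl
  · exact absurd hx' h₁
  · exact hx'
  · exact p₂_mem_of_q₁_mem hH h₁ hx'
  · exact p₂_mem_of_q₁_mem (Q := Q.flip.swap.flip) hH h₁ hx'

theorem exists_adj_p₂_notMem (hH : H.IsK14K23Free) (h₁ : Q.p₁ ∉ Q'.verts)
    (h₂ : Q.p₂ ∈ Q'.verts) : ∃ y ∈ Q'.verts, y ∉ Q.verts ∧ H.Adj Q.p₂ y := by
  obtain ⟨R, hR, hRv⟩ := Q'.exists_p₁_eq h₂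
  rw [← hRv] at h₁ ⊢
  by_contra! hno
  have hq : ∀ w ∈ R.verts, H.Adj Q.p₂ w → H.Adj Q.p₁ w := by
    intro w hw hadj
    rcases not_not.1 fun h => hno w hw h hadj with h | h | h | h
    · exact absurd (h ▸ hw) h₁
    · exact absurd h hadj.ne'
    · exact h ▸ Q.adj₁₁
    · exact h ▸ Q.adj₁₂
  have ha := hq _ R.q₁_mem (hR ▸ R.adj₁₁)
  have hb := hq _ R.q₂_mem (hR ▸ R.adj₁₂)
  -- `Q.p₁` would be a third common neighbour of `R.q₁` and `R.q₂`, besides `R.p₁ = Q.p₂`, `R.p₂`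
  rcases R.flip.eq_q_of_adj_p₁_p₂ hH ha.symm hb.symm with h | h
  · exact Q.p_ne (h.trans hR)
  · exact h₁ (h ▸ R.p₂_mem)

theorem notMem_of_verts_subset_insert (hH : H.IsK14K23Free) (hx : x ∉ Q.verts)
    (hsub : Q'.verts ⊆ insert x Q.verts) : x ∉ Q'.verts := by
  intro hx'
  obtain ⟨R, rfl, hRv⟩ := Q'.exists_p₁_eq hx'
  rw [← hRv] at hsub
  have hin : ∀ w ∈ R.verts, w ≠ R.p₁ → w ∈ Q.verts := fun w hw hne =>
    (hsub hw).resolve_left hne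
  obtain ⟨P, hP, hPv⟩ := Q.exists_p₁_eq (hin _ R.q₁_mem R.adj₁₁.ne')
  rw [← hPv] at hx hin
  obtain ⟨hx₁, hx₂, hx₃, hx₄⟩ := P.notMem_verts.1 hx
  have ha : H.Adj P.p₁ R.p₁ := hP ▸ R.adj₁₁.symm
  have hw : R.p₂ = P.q₁ ∨ R.p₂ = P.q₂ := by
    by_contra! h
    exact R.p_ne (P.eq_of_adj_p₁ hH ha (hP ▸ R.adj₂₁.symm) hx₃ hx₄ h.1 h.2)
  rcases P.mem_verts.1 (hin _ R.q₂_mem R.adj₁₂.ne') with hb | hb | hb | hb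
  · exact R.q_ne (hP.symm.trans hb.symm)
  · rcases P.eq_q_of_adj_p₁_p₂ hH ha (hb ▸ R.adj₁₂.symm) with h | h
    exacts [hx₃ h, hx₄ h]
  · have hw₂ : R.p₂ = P.q₂ := hw.resolve_left fun h => R.adj₂₂.ne (h.trans hb.symm)
    have h₁ : H.Adj P.q₁ R.p₁ := hb ▸ R.adj₁₂.symm
    have h₂ : H.Adj P.q₁ P.q₂ := hw₂ ▸ hb ▸ R.adj₂₂.symm
    exact hx₄ (P.flip.eq_of_adj_p₁ hH h₁ h₂ hx₁ hx₂ P.adj₁₂.ne' P.adj₂₂.ne')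
  · have hw₁ : R.p₂ = P.q₁ := hw.resolve_right fun h => R.adj₂₂.ne (h.trans hb.symm)
    have h₁ : H.Adj P.q₂ R.p₁ := hb ▸ R.adj₁₂.symm
    have h₂ : H.Adj P.q₂ P.q₁ := hw₁ ▸ hb ▸ R.adj₂₂.symm
    exact hx₃ (P.flip.swap.eq_of_adj_p₁ hH h₁ h₂ hx₁ hx₂ P.adj₁₁.ne' P.adj₂₁.ne')

theorem exists_disjoint [Fintype V] (hH : H.IsK14K23Free) (hcard : 5 ≤ Fintype.card V)
    (hsq : SquaresAvoidNonEdges H) (Q : Square H) :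
    ∃ Q' : Square H, Disjoint Q.verts Q'.verts := by
  by_cases hp : H.Adj Q.p₁ Q.p₂
  · obtain ⟨v, hv, hpv⟩ := hH.exists_ne_not_adj hcard Q.p₁
    obtain ⟨Q', h₁, -⟩ := hsq _ _ hv.symm hpv
    refine ⟨Q', by_contra fun hmeet => ?_⟩
    obtain ⟨y, -, hy, hpy⟩ := exists_adj_p₂_notMem hH h₁ (p₂_mem_of_not_disjoint hH h₁ hmeet)
    obtain ⟨-, -, hy₁, hy₂⟩ := Q.notMem_verts.1 hy
    -- `Q.p₂` already has the three neighbours `Q.q₁`, `Q.q₂`, `Q.p₁`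
    exact hy (Q.swap.eq_of_adj_p₁ hH hp.symm hpy Q.adj₁₁.ne Q.adj₁₂.ne hy₁ hy₂ ▸ Q.p₁_mem)
  · obtain ⟨Q', h₁, h₂⟩ := hsq _ _ Q.p_ne hp
    exact ⟨Q', by_contra fun hmeet => h₂ (p₂_mem_of_not_disjoint hH h₁ hmeet)⟩

/-- A square avoiding `Q.p₁` and `v ∈ Q'` cannot lie inside `Q' ∪ {s}`, so it meets `Q`, and
then `Q.p₂` has a neighbour in it outside `Q`, which is not `s`. -/
theorem exists_adj_p₂_ne_of_not_adj [Fintype V] (hH : H.IsK14K23Free)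
    (hsq : SquaresAvoidNonEdges H) {s v : V} (hdisj : Disjoint Q.verts Q'.verts)
    (hs : (Q.verts ∪ Q'.verts)ᶜ = {s}) (hps : ¬H.Adj Q.p₂ s) (hv : v ∈ Q'.verts)
    (hpv : ¬H.Adj Q.p₁ v) : ∃ y ∈ Q'.verts, y ≠ v ∧ H.Adj Q.p₂ y := by
  have hcover : ∀ w, w ∉ Q.verts → w ∉ Q'.verts → w = s := fun w h₁ h₂ => by
    rw [← mem_singleton_iff, ← hs]
    exact fun h => h.elim h₁ h₂
  obtain ⟨R, h₁, hv'⟩ := hsq _ _ (hdisj.ne_of_mem Q.p₁_mem hv) hpv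
  by_cases hmeet : Disjoint Q.verts R.verts
  · have hsub : R.verts ⊆ insert s Q'.verts := fun w hw => by
      by_cases h : w ∈ Q'.verts
      · exact .inr h
      · exact .inl (hcover w (hmeet.notMem_of_mem_right hw) h)
    have hs' : s ∉ Q'.verts := fun h =>
      (hs.symm ▸ mem_singleton s : s ∈ (Q.verts ∪ Q'.verts)ᶜ) (.inr h)
    have hsR := notMem_of_verts_subset_insert hH hs' hsub
    have hsub' : R.verts ⊆ Q'.verts := fun w hw =>
      (hsub hw).resolve_left fun h => hsR (h ▸ hw)
    have hRQ' := eq_of_subset_of_ncard_le hsub' (by rw [R.ncard_verts, Q'.ncard_verts])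
    exact absurd (hRQ' ▸ hv) hv'
  · obtain ⟨y, hyR, hy, hpy⟩ :=
      exists_adj_p₂_notMem hH h₁ (p₂_mem_of_not_disjoint hH h₁ hmeet)
    exact ⟨y, by_contra fun h => hps (hcover y hy h ▸ hpy), fun h => hv' (h ▸ hyR), hpy⟩

theorem adj_p₂_of_compl_eq_singleton [Fintype V] (hH : H.IsK14K23Free)
    (hsq : SquaresAvoidNonEdges H) {s : V} (hdisj : Disjoint Q.verts Q'.verts)
    (hs : (Q.verts ∪ Q'.verts)ᶜ = {s}) : H.Adj Q.p₂ s := by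
  have hout : ∀ w ∈ Q'.verts, w ≠ Q.q₁ ∧ w ≠ Q.q₂ := fun w hw =>
    ⟨(hdisj.ne_of_mem Q.q₁_mem hw).symm, (hdisj.ne_of_mem Q.q₂_mem hw).symm⟩
  by_contra hps
  obtain ⟨v, hv, hpv⟩ : ∃ v ∈ Q'.verts, ¬H.Adj Q.p₁ v := by
    by_contra! h
    exact Q'.p_ne (Q.eq_of_adj_p₁ hH (h _ Q'.p₁_mem) (h _ Q'.p₂_mem) (hout _ Q'.p₁_mem).1
      (hout _ Q'.p₁_mem).2 (hout _ Q'.p₂_mem).1 (hout _ Q'.p₂_mem).2)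
  obtain ⟨y, hy, -, hpy⟩ := exists_adj_p₂_ne_of_not_adj hH hsq hdisj hs hps hv hpv
  have hp₁y : ¬H.Adj Q.p₁ y := fun h => by
    rcases Q.eq_q_of_adj_p₁_p₂ hH h hpy with h | h
    exacts [(hout y hy).1 h, (hout y hy).2 h]
  obtain ⟨y', hy', hy'y, hpy'⟩ := exists_adj_p₂_ne_of_not_adj hH hsq hdisj hs hps hy hp₁y
  exact hy'y (Q.swap.eq_of_adj_p₁ hH hpy' hpy (hout _ hy').1 (hout _ hy').2 (hout _ hy).1
    (hout _ hy).2)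

end Square

theorem IsK14K23Free.not_squaresAvoidNonEdges [Fintype V] {H : SimpleGraph V}
    (hH : H.IsK14K23Free) (hcard : Fintype.card V = 9) : ¬SquaresAvoidNonEdges H := by
  intro hsq
  have : Nonempty V := Fintype.card_pos_iff.1 (by omega)
  obtain ⟨v, hv, hxv⟩ := hH.exists_ne_not_adj (by omega) (Classical.arbitrary V)
  obtain ⟨Q, -, -⟩ := hsq _ _ hv.symm hxv
  obtain ⟨Q', hdisj⟩ := Q.exists_disjoint hH (by omega) hsq
  obtain ⟨s, hs⟩ : ∃ s, (Q.verts ∪ Q'.verts)ᶜ = {s} := by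
    rw [← ncard_eq_one, ncard_compl, ncard_union_eq hdisj, Q.ncard_verts, Q'.ncard_verts,
      Nat.card_eq_fintype_card, hcard]
  have h₂ := Square.adj_p₂_of_compl_eq_singleton hH hsq hdisj hs
  have h₁ := Square.adj_p₂_of_compl_eq_singleton (Q := Q.swap) (Q' := Q') hH hsq
    (by rwa [Q.verts_swap]) (by rwa [Q.verts_swap])
  have hsQ : s ∉ Q.verts := fun h =>
    (hs.symm ▸ mem_singleton s : s ∈ (Q.verts ∪ Q'.verts)ᶜ) (.inl h)
  rcases Q.eq_q_of_adj_p₁_p₂ hH h₁ h₂ with rfl | rfl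
  exacts [hsQ Q.q₁_mem, hsQ Q.q₂_mem]

end SimpleGraph

section CriticalGraphs

variable [Fintype V] {G : SimpleGraph V}

theorem IsKConnected.isK14K23Free_compl {k : ℕ} (hG : IsKConnected k G)
    (hcard : Fintype.card V ≤ k + 4) : Gᶜ.IsK14K23Free where
  ncard_neighborSet_le x := by
    rcases (Gᶜ.neighborSet x).eq_empty_or_nonempty with h | h
    · simp [h]
    have := hG.ncard_add_ncard_add_le (singleton_nonempty x) h
      (disjoint_singleton_left.2 Gᶜ.notMem_neighborSet_self)
      (by rintro a rfl b hb; exact ((compl_adj G a b).1 hb).2)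
    rw [ncard_singleton] at this
    omega
  ncard_commonNeighbors_le {x y} hxy := by
    rcases (Gᶜ.commonNeighbors x y).eq_empty_or_nonempty with h | h
    · simp [h]
    have := hG.ncard_add_ncard_add_le (A := {x, y}) (insert_nonempty _ _) h
      (by simp [Set.disjoint_left, mem_commonNeighbors])
      (by
        rintro a ha b hb
        rw [mem_commonNeighbors] at hb
        rcases ha with rfl | rfl
        exacts [((compl_adj G _ _).1 hb.1).2, ((compl_adj G _ _).1 hb.2).2])
    rw [ncard_pair hxy] at this
    omega

variable [DecidableEq V] {u v : V}

theorem exists_isNontrivialFourCut_contractE (h5 : IsKConnected 5 G)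
    (hcc : ContractionCriticalQuasiFive G) (huv : G.Adj u v) :
    ∃ T, IsNontrivialFourCut (contractE G u v) T := by
  by_contra! hT
  refine hcc.2 u v huv ⟨⟨?_, fun S hS => h5.connected_induce_contractE hS⟩, hT⟩
  have := h5.1
  have := card_subtype_ne v
  rw [Nat.card_eq_fintype_card] at this
  omega

theorem card_eq_nine_and_exists_square_avoiding (h5 : IsKConnected 5 G)
    (hcc : ContractionCriticalQuasiFive G) (hcard : Fintype.card V ≤ 9) (huv : G.Adj u v) :
    Fintype.card V = 9 ∧ ∃ Q : Square Gᶜ, u ∉ Q.verts ∧ v ∉ Q.verts := by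
  obtain ⟨T, hT4, A, B, hA, hB, hAB, hT, hadj⟩ := exists_isNontrivialFourCut_contractE h5 hcc huv
  have huT : ⟨u, huv.ne⟩ ∈ T := by
    by_contra h
    rcases (hT ▸ h : ⟨u, huv.ne⟩ ∈ A ∪ B) with hu | hu
    · have := h5.le_ncard_of_contractE_separation huv.ne hu
        (nonempty_of_ncard_ne_zero (by omega)) hAB hT hadj
      omega
    · have := h5.le_ncard_of_contractE_separation huv.ne hu
        (nonempty_of_ncard_ne_zero (by omega)) hAB.symm (by rwa [union_comm])
        (fun b hb a ha h => hadj a ha b hb h.symm)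
      omega
  refine ⟨?_, ?_⟩
  · have hTc := ncard_add_ncard_compl T
    rw [← hT, ncard_union_eq hAB, card_subtype_ne] at hTc
    omega
  obtain ⟨a₁, a₂, ha₁, ha₂, ha⟩ := (one_lt_ncard_iff).1 hA
  obtain ⟨b₁, b₂, hb₁, hb₂, hb⟩ := (one_lt_ncard_iff).1 hB
  have hcross : ∀ a ∈ A, ∀ b ∈ B, Gᶜ.Adj a.1 b.1 := fun a ha b hb =>
    (compl_adj G _ _).2 ⟨fun h => hAB.ne_of_mem ha hb (Subtype.ext h),
      fun h => hadj a ha b hb (contractE_adj_of_adj h)⟩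
  have hu : ∀ w ∈ A ∪ B, u ≠ w.1 := fun w hw h =>
    (hT ▸ hw : w ∈ Tᶜ) (by rwa [show w = ⟨u, huv.ne⟩ from Subtype.ext h.symm])
  refine ⟨⟨a₁.1, a₂.1, b₁.1, b₂.1, fun h => ha (Subtype.ext h), fun h => hb (Subtype.ext h),
    hcross _ ha₁ _ hb₁, hcross _ ha₁ _ hb₂, hcross _ ha₂ _ hb₁, hcross _ ha₂ _ hb₂⟩, ?_, ?_⟩
  · exact (Square.notMem_verts _).2
      ⟨hu _ (.inl ha₁), hu _ (.inl ha₂), hu _ (.inr hb₁), hu _ (.inr hb₂)⟩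
  · exact (Square.notMem_verts _).2 ⟨a₁.2.symm, a₂.2.symm, b₁.2.symm, b₂.2.symm⟩

end CriticalGraphs

/-- A 5-connected, contraction critical quasi 5-connected graph
has at least 10 vertices. -/
theorem stmt7 {V : Type*} [Fintype V] [DecidableEq V] (G : SimpleGraph V)
    (h5 : IsKConnected 5 G) (hcc : ContractionCriticalQuasiFive G) :
    10 ≤ Fintype.card V := by
  by_contra! hcard
  have : Nonempty V := Fintype.card_pos_iff.1 (by have := h5.1; omega)
  obtain ⟨y, hxy⟩ := h5.exists_adj (by norm_num) (Classical.arbitrary V)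
  obtain ⟨h9, -⟩ := card_eq_nine_and_exists_square_avoiding h5 hcc (by omega) hxy
  refine (h5.isK14K23Free_compl (by omega)).not_squaresAvoidNonEdges h9 fun u v huv hnadj => ?_
  exact (card_eq_nine_and_exists_square_avoiding h5 hcc (by omega) (by simpa [huv] using hnadj)).2
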